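/- arXiv:1010.5321 — 3 statements merged into one kernel-verified Lean document; each statement's English description precedes it below -/
import Mathlib

section
/- Let n ≥ 2, k > 0, and define F : ℝⁿ → ℝⁿ by F(x)_i = k · (∏_{j=i+1}^{n−1} cosh(x_j/k)) · sinh(x_i/k) for 1 ≤ i ≤ n−1, and F(x)_n = x_n − k · ∑_{j=1}^{n−1} log(cosh(x_j/k)). Then F is injective, and for every measurable set D ⊆ ℝⁿ the Lebesgue measure of F(D) equals ∫_D ∏_{i=1}^{n−1} (cosh(x_i/k))^i dx_1 ⋯ dx_n. -/
open MeasureTheory Real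

/-- The transition map from hyperbolic orthogonal coordinates of `n`-dimensional
hyperbolic space with curvature parameter `k` to flat model coordinates. -/
noncomputable def hypOrthToFlat (n : ℕ) (k : ℝ) (x : Fin n → ℝ) : Fin n → ℝ := fun i =>
  if (i : ℕ) < n - 1 then
    k * (∏ j ∈ Finset.univ.filter (fun j : Fin n => (i : ℕ) < (j : ℕ) ∧ (j : ℕ) < n - 1),
          Real.cosh (x j / k)) * Real.sinh (x i / k)
  else
    x i - k * ∑ j ∈ Finset.univ.filter (fun j : Fin n => (j : ℕ) < n - 1),
          Real.log (Real.cosh (x j / k))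

/-! For `i < n - 1` the coordinate `F i` depends only on `x i, …, x (n - 2)` and, with those
fixed, is `k · P · sinh (x i / k)` with `P > 0`; the last coordinate is `x (n - 1)` plus a function
of the others. So `F` is injective, and its Jacobian matrix is upper triangular once the last
coordinate is listed first, with diagonal entries `∏_{i<j<n-1} cosh (x j / k) · cosh (x i / k)`
and `1`. Their product is `∏_{i<n-1} cosh (x i / k) ^ (i + 1)`, and the change of variables
formula for injective differentiable maps gives the measure of `F '' D`. -/

open Function

theorem Matrix.BlockTriangular.det_of_injective {m R α : Type*} [Fintype m] [DecidableEq m]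
    [CommRing R] [LinearOrder α] {M : Matrix m m R} {b : m → α} (hM : M.BlockTriangular b)
    (hb : Injective b) : M.det = ∏ i, M i i := by
  classical
  rw [hM.det, Finset.prod_image hb.injOn]
  refine Finset.prod_congr rfl fun i _ => ?_
  let : Unique {a // b a = b i} := ⟨⟨⟨i, rfl⟩⟩, fun j => Subtype.ext (hb j.property)⟩
  exact (Matrix.det_unique _).trans rfl

theorem Fin.prod_filter_lt_prod_mul_eq_prod_pow {M : Type*} [CommMonoid M] {n : ℕ} (N : ℕ)
    (f : Fin n → M) :
    ∏ i ∈ Finset.univ.filter (fun i : Fin n => (i : ℕ) < N),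
        (∏ j ∈ Finset.univ.filter (fun j : Fin n => (i : ℕ) < (j : ℕ) ∧ (j : ℕ) < N), f j) * f i =
      ∏ i ∈ Finset.univ.filter (fun i : Fin n => (i : ℕ) < N), f i ^ ((i : ℕ) + 1) := by
  rw [Finset.prod_mul_distrib, Finset.prod_comm' (s' := Finset.Iio)
      (t' := Finset.univ.filter (fun j : Fin n => (j : ℕ) < N)) (fun i j => by
      simp only [Finset.mem_filter, Finset.mem_univ, true_and, Finset.mem_Iio, Fin.lt_def]; omega),
    ← Finset.prod_mul_distrib]
  refine Finset.prod_congr rfl fun j _ => ?_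
  rw [Finset.prod_const, Fin.card_Iio, pow_succ]

theorem toMatrix'_fderiv_apply {𝕜 ι : Type*} [NontriviallyNormedField 𝕜] [Fintype ι]
    [DecidableEq ι] {f : (ι → 𝕜) → ι → 𝕜} {x : ι → 𝕜} (hf : DifferentiableAt 𝕜 f x) (i j : ι) :
    LinearMap.toMatrix' (fderiv 𝕜 f x : (ι → 𝕜) →ₗ[𝕜] ι → 𝕜) i j =
      deriv (fun t => f (update x j t) i) (x j) := by
  have hline : HasDerivAt (fun t => f (update x j t)) (fderiv 𝕜 f x (Pi.single j 1)) (x j) :=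
    hf.hasFDerivAt.comp_hasDerivAt_of_eq (x j) (hasDerivAt_update x j (x j))
      (update_eq_self j x).symm
  rw [(hasDerivAt_pi.1 hline i).deriv, LinearMap.toMatrix'_apply]
  rfl

theorem differentiable_hypOrthToFlat (n : ℕ) (k : ℝ) : Differentiable ℝ (hypOrthToFlat n k) := by
  refine differentiable_pi.2 fun i => ?_
  unfold hypOrthToFlat
  split_ifs
  · fun_prop
  · fun_prop (disch := exact fun _ => (Real.cosh_pos _).ne')

theorem hypOrthToFlat_update_apply_of_notMem_Ico {n : ℕ} {k : ℝ} (x : Fin n → ℝ) {i j : Fin n}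
    (hi : (i : ℕ) < n - 1) (hj : (j : ℕ) ∉ Set.Ico (i : ℕ) (n - 1)) (t : ℝ) :
    hypOrthToFlat n k (update x j t) i = hypOrthToFlat n k x i := by
  have hji : i ≠ j := by rintro rfl; exact hj ⟨le_rfl, hi⟩
  simp only [hypOrthToFlat, if_pos hi, update_of_ne hji]
  congr 2
  refine Finset.prod_congr rfl fun l hl => ?_
  have hlj : l ≠ j := by
    rintro rfl
    simp only [Finset.mem_filter, Finset.mem_univ, true_and] at hl
    exact hj ⟨hl.1.le, hl.2⟩
  rw [update_of_ne hlj]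

theorem hasDerivAt_hypOrthToFlat_update_self_of_lt {n : ℕ} {k : ℝ} (hk : k ≠ 0)
    (x : Fin n → ℝ) {i : Fin n} (hi : (i : ℕ) < n - 1) :
    HasDerivAt (fun t => hypOrthToFlat n k (update x i t) i)
      ((∏ j ∈ Finset.univ.filter (fun j : Fin n => (i : ℕ) < (j : ℕ) ∧ (j : ℕ) < n - 1),
        Real.cosh (x j / k)) * Real.cosh (x i / k)) (x i) := by
  set P := ∏ j ∈ Finset.univ.filter (fun j : Fin n => (i : ℕ) < (j : ℕ) ∧ (j : ℕ) < n - 1),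
    Real.cosh (x j / k)
  have hline :
      (fun t => hypOrthToFlat n k (update x i t) i) = fun t => k * P * Real.sinh (t / k) := by
    funext t
    simp only [hypOrthToFlat, if_pos hi, update_self, P]
    congr 2
    refine Finset.prod_congr rfl fun l hl => ?_
    have hli : l ≠ i := by rintro rfl; simp at hl
    rw [update_of_ne hli]
  rw [hline]
  exact (((hasDerivAt_id' (x i)).div_const k).sinh.const_mul (k * P)).congr_deriv (by field_simp)

theorem hasDerivAt_hypOrthToFlat_update_self_of_not_lt {n : ℕ} {k : ℝ} (x : Fin n → ℝ)
    {i : Fin n} (hi : ¬(i : ℕ) < n - 1) :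
    HasDerivAt (fun t => hypOrthToFlat n k (update x i t) i) 1 (x i) := by
  have hline : (fun t => hypOrthToFlat n k (update x i t) i) = fun t => t - k *
      ∑ j ∈ Finset.univ.filter (fun j : Fin n => (j : ℕ) < n - 1),
        Real.log (Real.cosh (x j / k)) := by
    funext t
    simp only [hypOrthToFlat, if_neg hi, update_self]
    congr 2
    refine Finset.sum_congr rfl fun l hl => ?_
    have hli : l ≠ i := by
      rintro rfl
      exact hi (Finset.mem_filter.1 hl).2
    rw [update_of_ne hli]
  rw [hline]
  exact (hasDerivAt_id (x i)).sub_const _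

theorem det_fderiv_hypOrthToFlat {n : ℕ} {k : ℝ} (hk : k ≠ 0) (x : Fin n → ℝ) :
    (fderiv ℝ (hypOrthToFlat n k) x).det =
      ∏ i ∈ Finset.univ.filter (fun i : Fin n => (i : ℕ) < n - 1),
        Real.cosh (x i / k) ^ ((i : ℕ) + 1) := by
  set J := LinearMap.toMatrix' (fderiv ℝ (hypOrthToFlat n k) x : (Fin n → ℝ) →ₗ[ℝ] Fin n → ℝ)
  have hJ : ∀ i j, J i j = deriv (fun t => hypOrthToFlat n k (update x j t) i) (x j) :=
    toMatrix'_fderiv_apply (differentiable_hypOrthToFlat n k x)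
  -- Listing the last coordinate first makes the Jacobian matrix upper triangular.
  let b : Fin n → ℤ := fun i => if (i : ℕ) < n - 1 then i else -1
  have hb : Injective b := by
    intro i j h
    simp only [b] at h
    ext
    split_ifs at h <;> omega
  have htri : J.BlockTriangular b := by
    intro i j hji
    simp only [b] at hji
    have hi : (i : ℕ) < n - 1 := by split_ifs at hji <;> omega
    have hj : (j : ℕ) ∉ Set.Ico (i : ℕ) (n - 1) := by
      rw [Set.mem_Ico]
      split_ifs at hji <;> omega
    simp only [hJ, hypOrthToFlat_update_apply_of_notMem_Ico x hi hj, deriv_const]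
  rw [ContinuousLinearMap.det, ← LinearMap.det_toMatrix', htri.det_of_injective hb,
    ← Fin.prod_filter_lt_prod_mul_eq_prod_pow, Finset.prod_filter]
  refine Finset.prod_congr rfl fun i _ => ?_
  split_ifs with hi
  · exact hJ i i ▸ (hasDerivAt_hypOrthToFlat_update_self_of_lt hk x hi).deriv
  · exact hJ i i ▸ (hasDerivAt_hypOrthToFlat_update_self_of_not_lt x hi).deriv

theorem hypOrthToFlat_injective {n : ℕ} {k : ℝ} (hk : k ≠ 0) : Injective (hypOrthToFlat n k) := by
  intro x y hxy
  -- Downward induction: once the coordinates above `i` agree, `F i` pins down the `i`-th one.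
  have hlt : ∀ i : Fin n, (i : ℕ) < n - 1 → x i = y i := by
    intro i
    induction i using WellFoundedGT.induction with
    | _ i ih =>
      intro hi
      have hFi := congrFun hxy i
      simp only [hypOrthToFlat, if_pos hi] at hFi
      rw [Finset.prod_congr rfl fun j hj => by
        simp only [Finset.mem_filter, Finset.mem_univ, true_and] at hj
        rw [ih j (Fin.lt_def.2 hj.1) hj.2]] at hFi
      have hP : (k * ∏ j ∈ Finset.univ.filter
          (fun j : Fin n => (i : ℕ) < (j : ℕ) ∧ (j : ℕ) < n - 1), Real.cosh (y j / k)) ≠ 0 :=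
        mul_ne_zero hk (Finset.prod_pos fun j _ => Real.cosh_pos _).ne'
      have hsinh := Real.sinh_injective (mul_left_cancel₀ hP hFi)
      rwa [div_left_inj' hk] at hsinh
  funext i
  by_cases hi : (i : ℕ) < n - 1
  · exact hlt i hi
  · have hFi := congrFun hxy i
    simp only [hypOrthToFlat, if_neg hi] at hFi
    rw [Finset.sum_congr rfl fun j hj => by
      rw [hlt j (Finset.mem_filter.1 hj).2]] at hFi
    linarith

theorem hypOrthToFlat_injective_and_measure_image_general (n : ℕ) (k : ℝ) (hk : 0 < k) :
    Function.Injective (hypOrthToFlat n k) ∧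
      ∀ D : Set (Fin n → ℝ), MeasurableSet D →
        volume (hypOrthToFlat n k '' D) =
          ∫⁻ x in D, ENNReal.ofReal
            (∏ i ∈ Finset.univ.filter (fun i : Fin n => (i : ℕ) < n - 1),
              (Real.cosh (x i / k)) ^ ((i : ℕ) + 1)) := by
  refine ⟨hypOrthToFlat_injective hk.ne', fun D hD => ?_⟩
  rw [← lintegral_abs_det_fderiv_eq_addHaar_image volume hD
    (fun x _ => (differentiable_hypOrthToFlat n k x).hasFDerivAt.hasFDerivWithinAt)
    (hypOrthToFlat_injective hk.ne').injOn]
  refine lintegral_congr fun x => ?_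
  rw [det_fderiv_hypOrthToFlat hk.ne', abs_of_nonneg (by positivity)]

/-- The transition map is injective, and the Lebesgue measure of the image of any
measurable set `D` equals `∫_D ∏_{i=1}^{n−1} cosh(x_i/k)^i dx`. -/
theorem hypOrthToFlat_injective_and_measure_image (n : ℕ) (hn : 2 ≤ n) (k : ℝ) (hk : 0 < k) :
    Function.Injective (hypOrthToFlat n k) ∧
      ∀ D : Set (Fin n → ℝ), MeasurableSet D →
        volume (hypOrthToFlat n k '' D) =
          ∫⁻ x in D, ENNReal.ofReal
            (∏ i ∈ Finset.univ.filter (fun i : Fin n => (i : ℕ) < n - 1),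
              (Real.cosh (x i / k)) ^ ((i : ℕ) + 1)) :=
  hypOrthToFlat_injective_and_measure_image_general n k hk
end

section
/- Let b, c > 0 and 0 ≤ L ≤ b be real numbers. Then ∫_0^L ∫_0^{artanh((tanh(c)/sinh(b))·sinh(y))} cosh²(z) · cosh(y) dz dy = (1/4) · sinh(L) · log((sinh(b) + tanh(c)·sinh(L)) / (sinh(b) − tanh(c)·sinh(L))). -/
/-!
With `u = k sinh y` and `k = tanh c / sinh b`, the inner integral is elementary:
`∫₀^A cosh² = (A + sinh A cosh A) / 2` and `sinh (artanh u) cosh (artanh u) = u / (1 - u²)`,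
so it equals `cosh y (artanh u + u / (1 - u²)) / 2`. This is exactly the derivative of
`sinh y · artanh (k sinh y) / 2`, the term `u / (1 - u²)` coming from the derivative of `artanh`.
Everything stays inside the domain `|u| < 1` because `|tanh c| < 1` and `0 ≤ sinh y ≤ sinh b`.
-/

open MeasureTheory Real intervalIntegral

/-- The inverse hyperbolic tangent, `artanh x = (1/2)·log((1+x)/(1−x))`. -/
noncomputable def artanh (x : ℝ) : ℝ := Real.log ((1 + x) / (1 - x)) / 2

open Set

theorem artanh_eq_real_artanh {x : ℝ} (hx : x ∈ Icc (-1) 1) :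
    _root_.artanh x = Real.artanh x := by
  rw [Real.artanh_eq_half_log hx, _root_.artanh]
  ring

theorem hasDerivAt_artanh {t : ℝ} (ht : t ∈ Ioo (-1) 1) :
    HasDerivAt _root_.artanh (1 - t ^ 2)⁻¹ t := by
  obtain ⟨h₁, h₂⟩ := ht
  have hadd : 0 < 1 + t := by linarith
  have hsub : 0 < 1 - t := by linarith
  have hquot : HasDerivAt (fun x => (1 + x) / (1 - x)) (2 / (1 - t) ^ 2) t := by
    refine (((hasDerivAt_id t).const_add 1).div ((hasDerivAt_id t).const_sub 1)
      hsub.ne').congr_deriv ?_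
    simp only [id_eq, one_mul, mul_neg, mul_one, neg_add_rev]
    ring
  have hsq : 1 - t ^ 2 ≠ 0 := by nlinarith
  refine ((hquot.log (div_pos hadd hsub).ne').div_const 2).congr_deriv ?_
  field_simp
  ring

theorem sinh_artanh_mul_cosh_artanh {t : ℝ} (ht : t ∈ Ioo (-1) 1) :
    sinh (_root_.artanh t) * cosh (_root_.artanh t) = t / (1 - t ^ 2) := by
  have hsq : 0 < 1 - t ^ 2 := by nlinarith [ht.1, ht.2]
  rw [artanh_eq_real_artanh (Ioo_subset_Icc_self ht), Real.sinh_artanh ht, Real.cosh_artanh ht,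
    div_mul_div_comm, mul_one, Real.mul_self_sqrt hsq.le]

theorem integral_cosh_sq (a b : ℝ) :
    ∫ x in a..b, cosh x ^ 2 = (sinh b * cosh b - sinh a * cosh a + b - a) / 2 := by
  have hderiv : ∀ x ∈ uIcc a b,
      HasDerivAt (fun x => (x + sinh x * cosh x) / 2) (cosh x ^ 2) x := by
    intro x _
    refine (((hasDerivAt_id x).add ((hasDerivAt_sinh x).mul (hasDerivAt_cosh x))).div_const
      2).congr_deriv ?_
    nlinarith [cosh_sq x]
  rw [integral_eq_sub_of_hasDerivAt hderiv ((continuous_cosh.pow 2).intervalIntegrable a b)]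
  ring

theorem integral_cosh_sq_artanh {t : ℝ} (ht : t ∈ Ioo (-1) 1) :
    ∫ z in (0 : ℝ).._root_.artanh t, cosh z ^ 2 = (_root_.artanh t + t / (1 - t ^ 2)) / 2 := by
  rw [integral_cosh_sq, sinh_artanh_mul_cosh_artanh ht]
  simp only [sinh_zero, cosh_zero]
  ring

section

variable {k : ℝ}

theorem hasDerivAt_sinh_mul_artanh {y : ℝ} (hy : k * sinh y ∈ Ioo (-1) 1) :
    HasDerivAt (fun x => sinh x * _root_.artanh (k * sinh x) / 2)
      (∫ z in (0 : ℝ).._root_.artanh (k * sinh y), cosh z ^ 2 * cosh y) y := by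
  have hinner := (hasDerivAt_artanh hy).comp y ((hasDerivAt_sinh y).const_mul k)
  refine (((hasDerivAt_sinh y).mul hinner).div_const 2).congr_deriv ?_
  rw [intervalIntegral.integral_mul_const, integral_cosh_sq_artanh hy, Function.comp_apply]
  field_simp

theorem continuousAt_integral_cosh_sq_artanh {y : ℝ} (hy : k * sinh y ∈ Ioo (-1) 1) :
    ContinuousAt (fun y => ∫ z in (0 : ℝ).._root_.artanh (k * sinh y), cosh z ^ 2 * cosh y) y := by
  simp only [intervalIntegral.integral_mul_const]
  have hprim : Continuous fun a => ∫ z in (0 : ℝ)..a, cosh z ^ 2 :=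
    continuous_primitive (fun _ _ => (continuous_cosh.pow 2).intervalIntegrable _ _) 0
  have hartanh : ContinuousAt (fun y => _root_.artanh (k * sinh y)) y :=
    (hasDerivAt_artanh hy).continuousAt.comp (f := fun y => k * sinh y) (by fun_prop)
  exact (hprim.continuousAt.comp hartanh).mul continuous_cosh.continuousAt

theorem integral_integral_cosh_sq_artanh {L : ℝ}
    (hL : ∀ y ∈ uIcc 0 L, k * sinh y ∈ Ioo (-1) 1) :
    ∫ y in (0 : ℝ)..L, ∫ z in (0 : ℝ).._root_.artanh (k * sinh y), cosh z ^ 2 * cosh y =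
      sinh L * _root_.artanh (k * sinh L) / 2 := by
  have hcont : ContinuousOn
      (fun y => ∫ z in (0 : ℝ).._root_.artanh (k * sinh y), cosh z ^ 2 * cosh y) (uIcc 0 L) :=
    fun y hy => (continuousAt_integral_cosh_sq_artanh (hL y hy)).continuousWithinAt
  rw [integral_eq_sub_of_hasDerivAt (fun y hy => hasDerivAt_sinh_mul_artanh (hL y hy))
    hcont.intervalIntegrable]
  simp

end

theorem orthosceme_inner_double_integral_general (b c L : ℝ) (hb : 0 < b)
    (hL0 : 0 ≤ L) (hLb : L ≤ b) :
    (∫ y in (0:ℝ)..L,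
        ∫ z in (0:ℝ)..(_root_.artanh ((Real.tanh c / Real.sinh b) * Real.sinh y)),
          Real.cosh z ^ 2 * Real.cosh y) =
      (1 / 4) * Real.sinh L *
        Real.log ((Real.sinh b + Real.tanh c * Real.sinh L) /
          (Real.sinh b - Real.tanh c * Real.sinh L)) := by
  have hsb : 0 < sinh b := sinh_pos_iff.mpr hb
  have hbound : ∀ y ∈ uIcc 0 L, tanh c / sinh b * sinh y ∈ Ioo (-1) 1 := by
    intro y hy
    rw [uIcc_of_le hL0] at hy
    have hr₀ : 0 ≤ sinh y / sinh b := div_nonneg (sinh_nonneg_iff.mpr hy.1) hsb.le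
    have hr₁ : sinh y / sinh b ≤ 1 := (div_le_one hsb).mpr (sinh_le_sinh.mpr (hy.2.trans hLb))
    rw [div_mul_eq_mul_div, mul_div_assoc]
    constructor <;> nlinarith [neg_one_lt_tanh c, tanh_lt_one c]
  rw [integral_integral_cosh_sq_artanh hbound, _root_.artanh, ← mul_div_mul_left _ _ hsb.ne']
  field_simp
  ring

/-- The key inner double-integral computation in the proof of the orthosceme volume
formula (Theorem 1). -/
theorem orthosceme_inner_double_integral (b c L : ℝ) (hb : 0 < b) (hc : 0 < c)
    (hL0 : 0 ≤ L) (hLb : L ≤ b) :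
    (∫ y in (0:ℝ)..L,
        ∫ z in (0:ℝ)..(_root_.artanh ((Real.tanh c / Real.sinh b) * Real.sinh y)),
          Real.cosh z ^ 2 * Real.cosh y) =
      (1 / 4) * Real.sinh L *
        Real.log ((Real.sinh b + Real.tanh c * Real.sinh L) /
          (Real.sinh b - Real.tanh c * Real.sinh L)) :=
  orthosceme_inner_double_integral_general b c L hb hL0 hLb
end

section
/- Let a, b, c > 0 be fixed real numbers and for ε > 0 let V(ε) = (1/4)·∫_0^{εb} (tanh(λ)·sinh(εa)/√(tanh²(εb)·cosh²(λ) + sinh²(εa)·sinh²(λ))) · log((sinh(εb) + tanh(εc)·sinh(λ))/(sinh(εb) − tanh(εc)·sinh(λ))) dλ. Then V(ε)/ε³ tends to a·b·c/6 as ε → 0⁺. -/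
/-!
On `0 ≤ l ≤ T = εb` the integrand is squeezed between `K₋(ε) l²` and `K₊(ε) l²`. For the
prefactor use `l / cosh T ≤ tanh l ≤ l` and `tanh T ≤ √(…) ≤ sinh T cosh (εa)`; for the logarithm,
with `S = sinh T` and `x = tanh (εc) sinh l`, use `2x/(S+x) ≤ log ((S+x)/(S-x)) ≤ 2x/(S-x)` and
`l ≤ sinh l ≤ l cosh T`. Since `sinh (εk)` and `tanh (εk)` are `εk + o(ε)`, both `K±(ε)` tend to
`2ac/b²`, so `V(ε)/ε³` tends to `¼ · 2ac/b² · b³/3 = abc/6`.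
-/

open Real Filter MeasureTheory intervalIntegral Set Topology

namespace Real

theorem sinh_le_mul_cosh_of_le {l T : ℝ} (hl : 0 ≤ l) (hlT : l ≤ T) : sinh l ≤ l * cosh T := by
  have hmvt := (convex_Icc 0 T).image_sub_le_mul_sub_of_deriv_le continuous_sinh.continuousOn
    differentiable_sinh.differentiableOn (C := cosh T) (fun x hx => by
      rw [interior_Icc] at hx
      rw [deriv_sinh, cosh_le_cosh, abs_of_pos hx.1, abs_of_pos (hx.1.trans hx.2)]
      exact hx.2.le) 0 ⟨le_rfl, hl.trans hlT⟩ l ⟨hl, hlT⟩ hl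
  simpa [mul_comm] using hmvt

theorem tanh_pos {x : ℝ} (hx : 0 < x) : 0 < tanh x := by
  rw [tanh_eq_sinh_div_cosh]
  exact div_pos (sinh_pos_iff.mpr hx) (cosh_pos x)

theorem tanh_nonneg {x : ℝ} (hx : 0 ≤ x) : 0 ≤ tanh x := by
  rw [tanh_eq_sinh_div_cosh]
  exact div_nonneg (sinh_nonneg_iff.mpr hx) (cosh_pos x).le

theorem continuous_tanh : Continuous tanh := by
  simp_rw [funext tanh_eq_sinh_div_cosh]
  exact continuous_sinh.div continuous_cosh fun x => (cosh_pos x).ne'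

theorem tanh_le_self {x : ℝ} (hx : 0 ≤ x) : tanh x ≤ x := by
  rw [tanh_eq_sinh_div_cosh, div_le_iff₀ (cosh_pos x)]
  exact sinh_le_mul_cosh_of_le hx le_rfl

theorem div_cosh_le_tanh {l T : ℝ} (hl : 0 ≤ l) (hlT : l ≤ T) : l / cosh T ≤ tanh l := by
  rw [tanh_eq_sinh_div_cosh]
  have hcosh : cosh l ≤ cosh T := by
    rw [cosh_le_cosh, abs_of_nonneg hl, abs_of_nonneg (hl.trans hlT)]
    exact hlT
  exact div_le_div₀ (sinh_nonneg_iff.mpr hl) (self_le_sinh_iff.mpr hl) (cosh_pos l) hcosh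

theorem two_mul_div_add_le_log_div {x S : ℝ} (hx : 0 ≤ x) (hxS : x < S) :
    2 * x / (S + x) ≤ log ((S + x) / (S - x)) := by
  have h := one_sub_inv_le_log_of_pos (show 0 < (S + x) / (S - x) by
    apply div_pos <;> linarith)
  have hSx : S - x ≠ 0 := by linarith
  have hSx' : S + x ≠ 0 := by linarith
  rw [inv_div] at h
  convert h using 1
  field_simp
  ring

theorem log_div_le_two_mul_div_sub {x S : ℝ} (hx : 0 ≤ x) (hxS : x < S) :
    log ((S + x) / (S - x)) ≤ 2 * x / (S - x) := by
  have h := log_le_sub_one_of_pos (show 0 < (S + x) / (S - x) by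
    apply div_pos <;> linarith)
  have hSx : S - x ≠ 0 := by linarith
  convert h using 1
  field_simp
  ring

theorem sqrt_tanh_sq_mul_cosh_sq_add_mem_Icc {l T α : ℝ} (hT : 0 < T) (hl : 0 ≤ l) (hlT : l ≤ T) :
    √(tanh T ^ 2 * cosh l ^ 2 + sinh α ^ 2 * sinh l ^ 2) ∈ Icc (tanh T) (sinh T * cosh α) := by
  have htanh : tanh T * cosh T = sinh T := by
    rw [tanh_eq_sinh_div_cosh, div_mul_cancel₀ _ (cosh_pos T).ne']
  have hcosh : cosh l ≤ cosh T := by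
    rw [cosh_le_cosh, abs_of_nonneg hl, abs_of_nonneg (hl.trans hlT)]
    exact hlT
  have hsinh : sinh l ≤ sinh T := sinh_le_sinh.mpr hlT
  have hsinh0 : 0 ≤ sinh l := sinh_nonneg_iff.mpr hl
  constructor
  · apply le_sqrt_of_sq_le
    have h1 : tanh T ^ 2 * 1 ≤ tanh T ^ 2 * cosh l ^ 2 :=
      mul_le_mul_of_nonneg_left (one_le_pow₀ (one_le_cosh l)) (sq_nonneg _)
    nlinarith [sq_nonneg (sinh α * sinh l)]
  · -- `(sinh T cosh α)² = tanh² T cosh² T + sinh² α sinh² T`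
    rw [sqrt_le_left (mul_nonneg (sinh_pos_iff.mpr hT).le (cosh_pos α).le), mul_pow, cosh_sq' α,
      ← htanh]
    have h1 : cosh l ^ 2 ≤ cosh T ^ 2 := pow_le_pow_left₀ (cosh_pos l).le hcosh 2
    have h2 : sinh l ^ 2 ≤ (tanh T * cosh T) ^ 2 := by
      rw [htanh]; exact pow_le_pow_left₀ hsinh0 hsinh 2
    nlinarith [mul_le_mul_of_nonneg_left h1 (sq_nonneg (tanh T)),
      mul_le_mul_of_nonneg_left h2 (sq_nonneg (sinh α))]

theorem tanh_mul_sinh_div_sqrt_mem_Icc {l T α : ℝ} (hT : 0 < T) (hα : 0 ≤ α) (hl : 0 ≤ l)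
    (hlT : l ≤ T) :
    tanh l * sinh α / √(tanh T ^ 2 * cosh l ^ 2 + sinh α ^ 2 * sinh l ^ 2) ∈
      Icc (l / cosh T * sinh α / (sinh T * cosh α)) (l * sinh α / tanh T) := by
  obtain ⟨hlower, hupper⟩ := sqrt_tanh_sq_mul_cosh_sq_add_mem_Icc (α := α) hT hl hlT
  have hsinhα : 0 ≤ sinh α := sinh_nonneg_iff.mpr hα
  constructor
  · exact div_le_div₀ (mul_nonneg (tanh_nonneg hl) hsinhα)
      (mul_le_mul_of_nonneg_right (div_cosh_le_tanh hl hlT) hsinhα)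
      ((tanh_pos hT).trans_le hlower) hupper
  · exact div_le_div₀ (mul_nonneg hl hsinhα) (mul_le_mul_of_nonneg_right (tanh_le_self hl) hsinhα)
      (tanh_pos hT) hlower

theorem mul_sinh_lt_sinh {l T τ : ℝ} (hT : 0 < T) (hτ0 : 0 ≤ τ) (hτ1 : τ < 1) (hlT : l ≤ T) :
    τ * sinh l < sinh T := by
  have hS : 0 < sinh T := sinh_pos_iff.mpr hT
  calc τ * sinh l ≤ τ * sinh T := mul_le_mul_of_nonneg_left (sinh_le_sinh.mpr hlT) hτ0
    _ < sinh T := by nlinarith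

theorem log_sinh_add_div_sinh_sub_mem_Icc {l T τ : ℝ} (hT : 0 < T) (hτ0 : 0 ≤ τ) (hτ1 : τ < 1)
    (hl : 0 ≤ l) (hlT : l ≤ T) :
    log ((sinh T + τ * sinh l) / (sinh T - τ * sinh l)) ∈
      Icc (2 * τ * l / (sinh T * (1 + τ))) (2 * τ * (l * cosh T) / (sinh T * (1 - τ))) := by
  have hS : 0 < sinh T := sinh_pos_iff.mpr hT
  have hx0 : 0 ≤ τ * sinh l := mul_nonneg hτ0 (sinh_nonneg_iff.mpr hl)
  have hxS : τ * sinh l < sinh T := mul_sinh_lt_sinh hT hτ0 hτ1 hlT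
  have hsinh : τ * sinh l ≤ τ * sinh T := mul_le_mul_of_nonneg_left (sinh_le_sinh.mpr hlT) hτ0
  constructor
  · refine le_trans ?_ (two_mul_div_add_le_log_div hx0 hxS)
    refine div_le_div₀ (by positivity) ?_ (by positivity) (by nlinarith)
    rw [mul_assoc]
    exact mul_le_mul_of_nonneg_left (mul_le_mul_of_nonneg_left (self_le_sinh_iff.mpr hl) hτ0)
      zero_le_two
  · refine (log_div_le_two_mul_div_sub hx0 hxS).trans ?_
    refine div_le_div₀ (by positivity) ?_ (by nlinarith) (by nlinarith)
    rw [mul_assoc]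
    exact mul_le_mul_of_nonneg_left (mul_le_mul_of_nonneg_left (sinh_le_mul_cosh_of_le hl hlT) hτ0)
      zero_le_two

end Real

theorem tendsto_integral_div_pow_three_of_sq_bounds {f : ℝ → ℝ → ℝ} {lo hi : ℝ → ℝ} {K b : ℝ}
    (hb : 0 ≤ b) (hlo : Tendsto lo (𝓝[>] 0) (𝓝 K)) (hhi : Tendsto hi (𝓝[>] 0) (𝓝 K))
    (hf : ∀ ε > 0, IntervalIntegrable (f ε) volume 0 (ε * b))
    (hbounds : ∀ ε > 0, ∀ l ∈ Icc 0 (ε * b), f ε l ∈ Icc (lo ε * l ^ 2) (hi ε * l ^ 2)) :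
    Tendsto (fun ε => (∫ l in 0..ε * b, f ε l) / ε ^ 3) (𝓝[>] 0) (𝓝 (K * b ^ 3 / 3)) := by
  have hsq : ∀ ε > 0, ∀ k : ℝ, (∫ l in 0..ε * b, k * l ^ 2) / ε ^ 3 = k * b ^ 3 / 3 := by
    intro ε hε k
    rw [intervalIntegral.integral_const_mul, integral_pow]
    field_simp
    ring
  have hsq_int : ∀ ε k, IntervalIntegrable (fun l : ℝ => k * l ^ 2) volume 0 (ε * b) :=
    fun ε k => (continuous_const.mul (continuous_pow 2)).intervalIntegrable _ _
  refine tendsto_of_tendsto_of_tendsto_of_le_of_le' (hlo.mul_const (b ^ 3) |>.div_const 3)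
    (hhi.mul_const (b ^ 3) |>.div_const 3) ?_ ?_ <;>
    filter_upwards [self_mem_nhdsWithin] with ε (hε : 0 < ε)
  · rw [← hsq ε hε]
    gcongr
    exact integral_mono_on (by positivity) (hsq_int ε _) (hf ε hε) fun l hl => (hbounds ε hε l hl).1
  · rw [← hsq ε hε]
    gcongr
    exact integral_mono_on (by positivity) (hf ε hε) (hsq_int ε _) fun l hl => (hbounds ε hε l hl).2

theorem tendsto_comp_mul_nhdsGT {g : ℝ → ℝ} (hg : Continuous g) (k : ℝ) :
    Tendsto (fun ε => g (ε * k)) (𝓝[>] 0) (𝓝 (g 0)) :=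
  tendsto_nhdsWithin_of_tendsto_nhds ((hg.comp (continuous_mul_const k)).tendsto' 0 (g 0) (by simp))

theorem tendsto_sinh_mul_div (k : ℝ) : Tendsto (fun ε => sinh (ε * k) / ε) (𝓝[>] 0) (𝓝 k) := by
  have h : HasDerivAt (fun ε => sinh (ε * k)) k 0 := by
    simpa using ((hasDerivAt_id 0).mul_const k).sinh
  simpa [div_eq_inv_mul] using h.tendsto_slope_zero_right

theorem tendsto_tanh_mul_div (k : ℝ) : Tendsto (fun ε => tanh (ε * k) / ε) (𝓝[>] 0) (𝓝 k) := by
  have h := (tendsto_sinh_mul_div k).div (tendsto_comp_mul_nhdsGT continuous_cosh k)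
    (cosh_pos 0).ne'
  rw [cosh_zero, div_one] at h
  refine h.congr fun ε => ?_
  simp [tanh_eq_sinh_div_cosh, div_right_comm]

noncomputable def orthoscemeIntegrand (a b c ε l : ℝ) : ℝ :=
  (tanh l * sinh (ε * a) / √(tanh (ε * b) ^ 2 * cosh l ^ 2 + sinh (ε * a) ^ 2 * sinh l ^ 2)) *
    log ((sinh (ε * b) + tanh (ε * c) * sinh l) / (sinh (ε * b) - tanh (ε * c) * sinh l))

noncomputable def orthoscemeLowerCoeff (a b c ε : ℝ) : ℝ :=
  2 * sinh (ε * a) * tanh (ε * c) /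
    (cosh (ε * b) * cosh (ε * a) * (1 + tanh (ε * c)) * sinh (ε * b) ^ 2)

noncomputable def orthoscemeUpperCoeff (a b c ε : ℝ) : ℝ :=
  2 * sinh (ε * a) * tanh (ε * c) * cosh (ε * b) /
    (tanh (ε * b) * sinh (ε * b) * (1 - tanh (ε * c)))

section Orthosceme

variable {a b c ε : ℝ}

theorem orthoscemeIntegrand_mem_Icc (ha : 0 < a) (hb : 0 < b) (hc : 0 < c) (hε : 0 < ε) {l : ℝ}
    (hl : l ∈ Icc 0 (ε * b)) :
    orthoscemeIntegrand a b c ε l ∈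
      Icc (orthoscemeLowerCoeff a b c ε * l ^ 2) (orthoscemeUpperCoeff a b c ε * l ^ 2) := by
  have hT : 0 < ε * b := mul_pos hε hb
  have hτ : 0 < tanh (ε * c) := tanh_pos (mul_pos hε hc)
  obtain ⟨hP₁, hP₂⟩ := tanh_mul_sinh_div_sqrt_mem_Icc hT (mul_pos hε ha).le hl.1 hl.2
  obtain ⟨hL₁, hL₂⟩ := log_sinh_add_div_sinh_sub_mem_Icc hT hτ.le (tanh_lt_one _) hl.1 hl.2
  have hL₀ : 0 ≤ 2 * tanh (ε * c) * l / (sinh (ε * b) * (1 + tanh (ε * c))) := by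
    have := hl.1; positivity
  have hP₀ : 0 ≤ l / cosh (ε * b) * sinh (ε * a) / (sinh (ε * b) * cosh (ε * a)) := by
    have := hl.1; positivity
  constructor
  · calc orthoscemeLowerCoeff a b c ε * l ^ 2
        = l / cosh (ε * b) * sinh (ε * a) / (sinh (ε * b) * cosh (ε * a)) *
            (2 * tanh (ε * c) * l / (sinh (ε * b) * (1 + tanh (ε * c)))) := by
          unfold orthoscemeLowerCoeff; field_simp
      _ ≤ orthoscemeIntegrand a b c ε l := mul_le_mul hP₁ hL₁ hL₀ (hP₀.trans hP₁)
  · calc orthoscemeIntegrand a b c ε l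
        ≤ l * sinh (ε * a) / tanh (ε * b) *
            (2 * tanh (ε * c) * (l * cosh (ε * b)) / (sinh (ε * b) * (1 - tanh (ε * c)))) :=
          mul_le_mul hP₂ hL₂ (hL₀.trans hL₁) (hP₀.trans (hP₁.trans hP₂))
      _ = orthoscemeUpperCoeff a b c ε * l ^ 2 := by
          unfold orthoscemeUpperCoeff; field_simp

theorem continuousOn_orthoscemeIntegrand (hb : 0 < b) (hc : 0 < c) (hε : 0 < ε) :
    ContinuousOn (orthoscemeIntegrand a b c ε) (Icc 0 (ε * b)) := by
  have hT : 0 < ε * b := mul_pos hε hb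
  have hτ : 0 ≤ tanh (ε * c) := tanh_nonneg (mul_pos hε hc).le
  have hsub : ∀ l ∈ Icc 0 (ε * b), 0 < sinh (ε * b) - tanh (ε * c) * sinh l := fun l hl =>
    sub_pos.mpr (mul_sinh_lt_sinh hT hτ (tanh_lt_one _) hl.2)
  have hadd : ∀ l ∈ Icc 0 (ε * b), 0 < sinh (ε * b) + tanh (ε * c) * sinh l := fun l hl => by
    have := mul_nonneg hτ (sinh_nonneg_iff.mpr hl.1)
    linarith [hsub l hl]
  have hrad : ∀ l, 0 < tanh (ε * b) ^ 2 * cosh l ^ 2 + sinh (ε * a) ^ 2 * sinh l ^ 2 := fun l => by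
    have := tanh_pos hT; have := cosh_pos l; positivity
  unfold orthoscemeIntegrand
  refine ContinuousOn.mul (Continuous.continuousOn ((continuous_tanh.mul continuous_const).div
    (by fun_prop) fun l => (sqrt_pos.mpr (hrad l)).ne')) ?_
  refine ContinuousOn.log (ContinuousOn.div (by fun_prop) (by fun_prop)
    fun l hl => (hsub l hl).ne') fun l hl => (div_pos (hadd l hl) (hsub l hl)).ne'

theorem tendsto_orthoscemeLowerCoeff (hb : b ≠ 0) :
    Tendsto (orthoscemeLowerCoeff a b c) (𝓝[>] 0) (𝓝 (2 * a * c / b ^ 2)) := by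
  have h := (((tendsto_sinh_mul_div a).const_mul 2).mul (tendsto_tanh_mul_div c)).div
    ((((tendsto_comp_mul_nhdsGT continuous_cosh b).mul
      (tendsto_comp_mul_nhdsGT continuous_cosh a)).mul
      ((tendsto_comp_mul_nhdsGT continuous_tanh c).const_add 1)).mul
      ((tendsto_sinh_mul_div b).pow 2)) (by simpa using hb)
  simp only [cosh_zero, tanh_zero, one_mul, add_zero] at h
  refine h.congr' ?_
  filter_upwards [self_mem_nhdsWithin] with ε (hε : 0 < ε)
  simp only [orthoscemeLowerCoeff, Pi.div_apply]
  field_simp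

theorem tendsto_orthoscemeUpperCoeff (hb : b ≠ 0) :
    Tendsto (orthoscemeUpperCoeff a b c) (𝓝[>] 0) (𝓝 (2 * a * c / b ^ 2)) := by
  have h := ((((tendsto_sinh_mul_div a).const_mul 2).mul (tendsto_tanh_mul_div c)).mul
    (tendsto_comp_mul_nhdsGT continuous_cosh b)).div
    (((tendsto_tanh_mul_div b).mul (tendsto_sinh_mul_div b)).mul
      ((tendsto_comp_mul_nhdsGT continuous_tanh c).const_sub 1)) (by simpa using hb)
  simp only [cosh_zero, tanh_zero, mul_one, sub_zero] at h
  refine (h.congr' ?_).trans (by rw [sq])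
  filter_upwards [self_mem_nhdsWithin] with ε (hε : 0 < ε)
  have hτ : 1 - tanh (ε * c) ≠ 0 := (sub_pos.mpr (tanh_lt_one _)).ne'
  simp only [orthoscemeUpperCoeff, Pi.div_apply]
  field_simp

end Orthosceme

/-- The hyperbolic volume (curvature `k = 1`, via Theorem 1) of the orthosceme with
edge lengths `εa`, `εb`, `εc` behaves like `ε³·abc/6` as `ε → 0⁺`: the formula
recovers the Euclidean volume of a small orthosceme. -/
theorem orthosceme_volume_euclidean_limit (a b c : ℝ) (ha : 0 < a) (hb : 0 < b) (hc : 0 < c) :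
    Filter.Tendsto
      (fun ε : ℝ =>
        ((1 / 4) * ∫ l in (0:ℝ)..(ε * b),
          (Real.tanh l * Real.sinh (ε * a) /
              Real.sqrt (Real.tanh (ε * b) ^ 2 * Real.cosh l ^ 2 +
                Real.sinh (ε * a) ^ 2 * Real.sinh l ^ 2)) *
            Real.log ((Real.sinh (ε * b) + Real.tanh (ε * c) * Real.sinh l) /
              (Real.sinh (ε * b) - Real.tanh (ε * c) * Real.sinh l))) / ε ^ 3)
      (nhdsWithin 0 (Set.Ioi 0))
      (nhds (a * b * c / 6)) := by
  have key := tendsto_integral_div_pow_three_of_sq_bounds hb.le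
    (tendsto_orthoscemeLowerCoeff (a := a) (c := c) hb.ne') (tendsto_orthoscemeUpperCoeff hb.ne')
    (fun ε hε => (continuousOn_orthoscemeIntegrand hb hc hε).intervalIntegrable_of_Icc
      (mul_pos hε hb).le)
    (fun ε hε l hl => orthoscemeIntegrand_mem_Icc ha hb hc hε hl)
  have hlimit : 1 / 4 * (2 * a * c / b ^ 2 * b ^ 3 / 3) = a * b * c / 6 := by
    field_simp
    ring
  rw [← hlimit]
  exact (key.const_mul (1 / 4)).congr fun ε => (mul_div_assoc _ _ _).symm
end
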